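/- The map from the second cohomology group H²(G,U(1)) of a finite abelian group G to Hom(G,G*), sending [ω] to φ_ω where φ_ω(g)(h) = ω(h,g)ω(g,h)⁻¹, is an injective group homomorphism (linearity in ω plus: φ_ω trivial implies [ω] trivial). -/

import Mathlib

noncomputable instance : RootableBy ℂˣ ℤ where
  root a n := if hn : n = 0 then 1 else
    Units.mk0 (Complex.exp (Complex.log (a : ℂ) / n)) (Complex.exp_ne_zero _)
  root_zero a := dif_pos rfl
  root_cancel := fun {n} a hn => by
    rw [dif_neg hn]
    ext
    rw [Units.val_zpow_eq_zpow_val]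
    simp only [Units.val_mk0]
    rw [← Complex.exp_int_mul, mul_div_cancel₀ _ (by exact_mod_cast hn : (n : ℂ) ≠ 0),
      Complex.exp_log a.ne_zero]

noncomputable instance {A : Type*} [Group A] [RootableBy A ℤ] :
    DivisibleBy (Additive A) ℤ where
  div a n := Additive.ofMul (RootableBy.root a.toMul n)
  div_zero a := congrArg Additive.ofMul (RootableBy.root_zero _)
  div_cancel a hn := by
    show (_ • Additive.ofMul _) = a
    rw [← ofMul_zpow, RootableBy.root_cancel _ hn]
    rfl

universe u

@[ext]
structure TwExt (G : Type u) : Type u where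
  a : ℂˣ
  g : G

variable {G : Type u} [CommGroup G]

def twCommGroup (u : G → G → ℂˣ)
    (hcoc : ∀ a b c, u a b * u (a * b) c = u b c * u a (b * c))
    (hsym : ∀ a b, u a b = u b a)
    (h1 : ∀ g, u 1 g = 1) (h2 : ∀ g, u g 1 = 1) : CommGroup (TwExt G) where
  mul x y := ⟨x.a * y.a * u x.g y.g, x.g * y.g⟩
  one := ⟨1, 1⟩
  inv x := ⟨(x.a * u x.g x.g⁻¹)⁻¹, x.g⁻¹⟩
  mul_assoc x y z := by
    have h := congrArg Units.val (hcoc x.g y.g z.g)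
    refine TwExt.ext (Units.ext ?_) (mul_assoc _ _ _)
    show ((x.a * y.a * u x.g y.g) * z.a * u (x.g * y.g) z.g : ℂˣ).val
      = (x.a * (y.a * z.a * u y.g z.g) * u x.g (y.g * z.g) : ℂˣ).val
    simp only [Units.val_mul] at h ⊢
    linear_combination (x.a * y.a * z.a : ℂ) * h
  one_mul x := by
    refine TwExt.ext ?_ (one_mul _)
    show 1 * x.a * u 1 x.g = x.a
    rw [h1, one_mul, mul_one]
  mul_one x := by
    refine TwExt.ext ?_ (mul_one _)
    show x.a * 1 * u x.g 1 = x.a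
    rw [h2, mul_one, mul_one]
  inv_mul_cancel x := by
    refine TwExt.ext ?_ (inv_mul_cancel _)
    show (x.a * u x.g x.g⁻¹)⁻¹ * x.a * u x.g⁻¹ x.g = 1
    rw [hsym x.g⁻¹ x.g]
    group
  mul_comm x y := by
    refine TwExt.ext ?_ (mul_comm _ _)
    show x.a * y.a * u x.g y.g = y.a * x.a * u y.g x.g
    rw [hsym, mul_comm x.a y.a]

theorem tw_splits (u : G → G → ℂˣ)
    (hcoc : ∀ a b c, u a b * u (a * b) c = u b c * u a (b * c))
    (hsym : ∀ a b, u a b = u b a) (h11 : u 1 1 = 1) :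
    ∃ β : G → ℂˣ, ∀ a b, u a b = β a * β b * (β (a * b))⁻¹ := by
  have h1 : ∀ g, u 1 g = 1 := by
    intro g
    have h := hcoc 1 1 g
    simp only [one_mul] at h
    rw [h11, one_mul] at h
    exact left_eq_mul.mp h
  have h2 : ∀ g, u g 1 = 1 := by
    intro g
    have h := hcoc g 1 1
    simp only [mul_one] at h
    rw [h11, one_mul] at h
    exact mul_eq_right.mp h
  letI : CommGroup (TwExt G) := twCommGroup u hcoc hsym h1 h2
  -- the inclusion ℂˣ → TwExt G as a monoid hom
  let j : ULift.{u} ℂˣ →* TwExt G :=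
    { toFun := fun a => ⟨a.down, 1⟩
      map_one' := rfl
      map_mul' := fun a b => by
        refine TwExt.ext ?_ ?_
        · show (a * b).down = a.down * b.down * u 1 1
          rw [h11, mul_one]; rfl
        · show (1 : G) = 1 * 1
          rw [mul_one] }
  have hjinj : Function.Injective j := by
    intro a b hab
    exact ULift.ext _ _ (congrArg TwExt.a hab)
  let Q := Additive (ULift.{u} ℂˣ)
  haveI : Module.Injective ℤ Q := (Module.Baer.of_divisible Q).injective
  let f : Q →ₗ[ℤ] Additive (TwExt G) := (MonoidHom.toAdditive j).toIntLinearMap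
  obtain ⟨r, hr⟩ := Module.Injective.out (R := ℤ) (Q := Q) f hjinj LinearMap.id
  -- define β
  refine ⟨fun g => (r (Additive.ofMul (⟨1, g⟩ : TwExt G))).toMul.down, fun a b => ?_⟩
  have key : (⟨1, a⟩ : TwExt G) * ⟨1, b⟩ = (j ⟨u a b⟩) * ⟨1, a * b⟩ := by
    refine TwExt.ext ?_ ?_
    · show (1 : ℂˣ) * 1 * u a b = u a b * 1 * u 1 (a * b)
      simp [h1]
    · show a * b = 1 * (a * b)
      rw [one_mul]
  have hmul : ∀ x y : TwExt G,
      r (Additive.ofMul (x * y)) = r (Additive.ofMul x) + r (Additive.ofMul y) := by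
    intro x y
    exact map_add r (Additive.ofMul x) (Additive.ofMul y)
  have h3 := congrArg r (congrArg Additive.ofMul key)
  rw [hmul, hmul] at h3
  have h4 : r (Additive.ofMul (j ⟨u a b⟩)) = Additive.ofMul (⟨u a b⟩ : ULift.{u} ℂˣ) :=
    hr (Additive.ofMul (⟨u a b⟩ : ULift.{u} ℂˣ))
  rw [h4] at h3
  have h6 := congrArg (fun z => (Additive.toMul z).down) h3
  have h7 : (Additive.toMul (r (Additive.ofMul (⟨1, a⟩ : TwExt G)))).down *
      (Additive.toMul (r (Additive.ofMul (⟨1, b⟩ : TwExt G)))).down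
      = u a b * (Additive.toMul (r (Additive.ofMul (⟨1, a * b⟩ : TwExt G)))).down := h6
  beta_reduce
  symm
  rw [mul_inv_eq_iff_eq_mul]
  exact h7

theorem stmt_13_part2 {G : Type*} [CommGroup G]
    (ω : G → G → ℂ) (habs : ∀ g₁ g₂, ‖ω g₁ g₂‖ = 1)
    (hcoc : ∀ g₁ g₂ g₃, ω g₁ g₂ * ω (g₁ * g₂) g₃ = ω g₂ g₃ * ω g₁ (g₂ * g₃))
    (hsym : ∀ g h, ω h g * (ω g h)⁻¹ = 1) :
    ∃ β : G → ℂ, (∀ g, ‖β g‖ = 1) ∧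
      ∀ g₁ g₂, ω g₁ g₂ = β g₁ * β g₂ * (β (g₁ * g₂))⁻¹ := by
  have hne : ∀ g₁ g₂, ω g₁ g₂ ≠ 0 := fun g₁ g₂ h => by
    have := habs g₁ g₂; rw [h] at this; simp at this
  have hsym' : ∀ g h, ω h g = ω g h := fun g h => by
    exact (mul_inv_eq_one₀ (hne g h)).mp (hsym g h)
  set c := ω 1 1 with hc
  have hcne : c ≠ 0 := hne 1 1
  let u : G → G → ℂˣ := fun g h => Units.mk0 (ω g h / c) (div_ne_zero (hne g h) hcne)
  obtain ⟨β', hβ'⟩ := tw_splits u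
    (by
      intro a b k
      ext
      simp only [u, Units.val_mul, Units.val_mk0]
      field_simp
      linear_combination hcoc a b k)
    (by intro a b; ext; simp only [u, Units.val_mk0]; rw [hsym'])
    (by ext; simp only [u, Units.val_mk0]; exact div_self hcne)
  set b : G → ℂ := fun g => c * (β' g : ℂ) with hb
  have hbne : ∀ g, b g ≠ 0 := fun g => mul_ne_zero hcne (β' g).ne_zero
  have hrel : ∀ g₁ g₂, ω g₁ g₂ = b g₁ * b g₂ * (b (g₁ * g₂))⁻¹ := by
    intro g₁ g₂
    have h := congrArg Units.val (hβ' g₁ g₂)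
    simp only [u, Units.val_mul, Units.val_mk0] at h
    rw [Units.val_inv_eq_inv_val] at h
    field_simp at h
    rw [eq_mul_inv_iff_mul_eq₀ (hbne (g₁ * g₂))]
    simp only [hb]
    linear_combination c * h
  have habsb : ∀ g₁ g₂, ‖b g₁‖ * ‖b g₂‖ = ‖b (g₁ * g₂)‖ := by
    intro g₁ g₂
    have := congrArg norm (hrel g₁ g₂)
    rw [habs, norm_mul, norm_mul, norm_inv] at this
    have hpos : ‖b (g₁ * g₂)‖ ≠ 0 := by
      simp [norm_ne_zero_iff, hbne]
    field_simp at this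
    linarith [this]
  refine ⟨fun g => b g / (‖b g‖ : ℂ), fun g => ?_, fun g₁ g₂ => ?_⟩
  · rw [norm_div, Complex.norm_real, Real.norm_of_nonneg (norm_nonneg _),
      div_self (by simp [norm_ne_zero_iff, hbne])]
  · have habsne : ∀ g, (‖b g‖ : ℂ) ≠ 0 := fun g => by
      simp [norm_ne_zero_iff, hbne]
    have hA : (‖b g₁‖ : ℂ) * (‖b g₂‖ : ℂ)
        = (‖b (g₁ * g₂)‖ : ℂ) := by
      have := congrArg (Complex.ofReal) (habsb g₁ g₂)
      push_cast at this
      exact this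
    rw [hrel g₁ g₂, div_mul_div_comm, inv_div, ← hA]
    have h1 := habsne g₁
    have h2 := habsne g₂
    have h3 := hbne (g₁ * g₂)
    field_simp

/-- The map `[ω] ↦ φ_ω`, `φ_ω(g)(h) = ω(h,g)ω(g,h)⁻¹`, from `H²(G,U(1))` to
`Hom(G,G*)` is an injective group homomorphism.  At the level of cocycles: it is linear in `ω`
(the commutator pairing of a product of cocycles is the product of the pairings), and if the
pairing of `ω` is trivial then `ω` is a coboundary (so `[ω]` is trivial). -/
theorem stmt_13 {G : Type*} [CommGroup G] [Fintype G] :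
    (∀ ω₁ ω₂ : G → G → ℂ,
      (∀ g₁ g₂, ‖ω₁ g₁ g₂‖ = 1) → (∀ g₁ g₂, ‖ω₂ g₁ g₂‖ = 1) →
      ∀ g h, (ω₁ h g * ω₂ h g) * ((ω₁ g h * ω₂ g h))⁻¹
        = (ω₁ h g * (ω₁ g h)⁻¹) * (ω₂ h g * (ω₂ g h)⁻¹)) ∧
    (∀ ω : G → G → ℂ, (∀ g₁ g₂, ‖ω g₁ g₂‖ = 1) →
      (∀ g₁ g₂ g₃, ω g₁ g₂ * ω (g₁ * g₂) g₃ = ω g₂ g₃ * ω g₁ (g₂ * g₃)) →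
      (∀ g h, ω h g * (ω g h)⁻¹ = 1) →
      ∃ β : G → ℂ, (∀ g, ‖β g‖ = 1) ∧
        ∀ g₁ g₂, ω g₁ g₂ = β g₁ * β g₂ * (β (g₁ * g₂))⁻¹) := by
  constructor
  · intro ω₁ ω₂ h₁ h₂ g h
    rw [mul_inv]
    ring
  · intro ω habs hcoc hsym
    exact stmt_13_part2 ω habs hcoc hsym
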